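/- arXiv:1705.01686 — 4 statements merged into one kernel-verified Lean document; each statement's English description precedes it below -/
import Mathlib

section
/- Every Bacon-Shor stabilizer commutes with every gauge operator: for all i ∈ (m), j ∈ (n), h ∈ (m), k ∈ [n), i' ∈ [m), j' ∈ (n), the operators Z̃_j and X̃_i commute with both X̄_{h,k} = X_{h-1,k}X_{h,k} and Z̄_{i',j'} = Z_{i',j'-1}Z_{i',j'}. -/
open Matrix

noncomputable section

variable (m n : ℕ)

/-- States of the m×n lattice of qubits. -/
abbrev BSLat (m n : ℕ) := Fin m × Fin n → Fin 2

/-- Pauli X on the single qubit (i,k). -/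
def Xs (i : Fin m) (k : Fin n) : Matrix (BSLat m n) (BSLat m n) ℂ :=
  Matrix.of fun x y => if y = Function.update x (i, k) (x (i, k) + 1) then 1 else 0

/-- Pauli Z on the single qubit (i,j). -/
def Zs (i : Fin m) (j : Fin n) : Matrix (BSLat m n) (BSLat m n) ℂ :=
  Matrix.of fun x y => if x = y then ((-1 : ℂ)) ^ ((x (i, j)).val) else 0

/-- X_{i,*}: Pauli X on every qubit of row i. -/
def Xrow (i : Fin m) : Matrix (BSLat m n) (BSLat m n) ℂ :=
  Matrix.of fun x y => if y = (fun p => if p.1 = i then x p + 1 else x p) then 1 else 0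

/-- Z_{*,j}: Pauli Z on every qubit of column j. -/
def Zcol (j : Fin n) : Matrix (BSLat m n) (BSLat m n) ℂ :=
  Matrix.of fun x y => if x = y then ((-1 : ℂ)) ^ (∑ i : Fin m, (x (i, j)).val) else 0

/-- Stabilizer Z̃_j = Z_{*,j-1}Z_{*,j}. -/
def Ztilde [NeZero n] (j : Fin n) : Matrix (BSLat m n) (BSLat m n) ℂ :=
  Zcol m n (j - 1) * Zcol m n j

/-- Stabilizer X̃_i = X_{i-1,*}X_{i,*}. -/
def Xtilde [NeZero m] (i : Fin m) : Matrix (BSLat m n) (BSLat m n) ℂ :=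
  Xrow m n (i - 1) * Xrow m n i

/-- Gauge operator X̄_{h,k} = X_{h-1,k}X_{h,k}. -/
def Xbar [NeZero m] (h : Fin m) (k : Fin n) : Matrix (BSLat m n) (BSLat m n) ℂ :=
  Xs m n (h - 1) k * Xs m n h k

/-- Gauge operator Z̄_{i,j} = Z_{i,j-1}Z_{i,j}. -/
def Zbar [NeZero n] (i : Fin m) (j : Fin n) : Matrix (BSLat m n) (BSLat m n) ℂ :=
  Zs m n i (j - 1) * Zs m n i j

/-
Describe a Pauli operator by its `X`-part `s` and `Z`-part `t`, vectors over `ZMod 2`: `X_s` is the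
translation `x ↦ x + s` of the computational basis, `Z_t` the diagonal sign `x ↦ (-1) ^ (t ⬝ᵥ x)`.
Then `X_s Z_t = (-1) ^ (t ⬝ᵥ s) Z_t X_s`, while operators of the same type always commute. A gauge
operator is supported on two qubits `p, q` of a common column (`X̄`) or row (`Z̄`), and the stabilizer
of the opposite type is a sum of indicators of full columns (`Z̃`) or rows (`X̃`), so `t p = t q` and
the pairing `t p + t q` vanishes in characteristic two.
-/

section PauliOperators

variable {α R : Type*} [Fintype α] [DecidableEq α] [CommRing R]

variable (R) in
abbrev signChar : AddChar (ZMod 2) R := AddChar.zmodChar 2 neg_one_sq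

variable (R) in
def pauliX (s : α → ZMod 2) : Matrix (α → ZMod 2) (α → ZMod 2) R :=
  of fun x y => if y = x + s then 1 else 0

variable (R) in
def pauliZ (t : α → ZMod 2) : Matrix (α → ZMod 2) (α → ZMod 2) R :=
  diagonal fun x => signChar R (t ⬝ᵥ x)

theorem pauliX_mul_pauliX (s s' : α → ZMod 2) :
    pauliX R s * pauliX R s' = pauliX R (s + s') := by
  ext x y
  rw [mul_apply, Finset.sum_eq_single (x + s)]
  · simp [pauliX, add_assoc]
  · intro z _ hz
    simp [pauliX, hz]
  · simp

theorem pauliZ_mul_pauliZ (t t' : α → ZMod 2) :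
    pauliZ R t * pauliZ R t' = pauliZ R (t + t') := by
  simp only [pauliZ, diagonal_mul_diagonal, add_dotProduct, AddChar.map_add_eq_mul]

theorem pauliX_mul_pauliZ (s t : α → ZMod 2) :
    pauliX R s * pauliZ R t = signChar R (t ⬝ᵥ s) • (pauliZ R t * pauliX R s) := by
  ext x y
  simp only [pauliZ, mul_diagonal, diagonal_mul, Matrix.smul_apply, smul_eq_mul, pauliX, of_apply]
  split_ifs with hy
  · rw [hy, dotProduct_add, AddChar.map_add_eq_mul]
    ring
  · simp

theorem commute_pauliX_pauliZ {s t : α → ZMod 2} (h : t ⬝ᵥ s = 0) :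
    Commute (pauliX R s) (pauliZ R t) := by
  rw [Commute, SemiconjBy, pauliX_mul_pauliZ, h, AddChar.map_zero_eq_one, one_smul]

theorem commute_pauliX_pauliX (s s' : α → ZMod 2) : Commute (pauliX R s) (pauliX R s') := by
  rw [Commute, SemiconjBy, pauliX_mul_pauliX, pauliX_mul_pauliX, add_comm]

theorem commute_pauliZ_pauliZ (t t' : α → ZMod 2) : Commute (pauliZ R t) (pauliZ R t') := by
  rw [Commute, SemiconjBy, pauliZ_mul_pauliZ, pauliZ_mul_pauliZ, add_comm]

theorem dotProduct_single_add_single_eq_zero {t : α → ZMod 2} {p q : α} (h : t p = t q) :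
    t ⬝ᵥ (Pi.single p 1 + Pi.single q 1) = 0 := by
  rw [dotProduct_add, dotProduct_single, dotProduct_single, mul_one, mul_one, h,
    CharTwo.add_self_eq_zero]

end PauliOperators

section BaconShor

def rowSupport (i : Fin m) : Fin m × Fin n → ZMod 2 := fun p => if p.1 = i then 1 else 0

def colSupport (j : Fin n) : Fin m × Fin n → ZMod 2 := fun p => if p.2 = j then 1 else 0

theorem Xs_eq_pauliX (i : Fin m) (k : Fin n) : Xs m n i k = pauliX ℂ (Pi.single (i, k) 1) := by
  have hflip : ∀ x : Fin m × Fin n → ZMod 2,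
      Function.update x (i, k) (x (i, k) + 1) = x + Pi.single (i, k) 1 := by
    intro x
    funext p
    by_cases hp : p = (i, k)
    · subst hp
      simp
    · simp [hp]
  unfold Xs pauliX
  simp_rw [← hflip]
  rfl

theorem Xrow_eq_pauliX (i : Fin m) : Xrow m n i = pauliX ℂ (rowSupport m n i) := by
  have hflip : ∀ x : Fin m × Fin n → ZMod 2,
      (fun p => if p.1 = i then x p + 1 else x p) = x + rowSupport m n i := by
    intro x
    funext p
    simp only [rowSupport, Pi.add_apply]
    split_ifs <;> simp
  unfold Xrow pauliX
  simp_rw [← hflip]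
  rfl

theorem Zs_eq_pauliZ (i : Fin m) (j : Fin n) : Zs m n i j = pauliZ ℂ (Pi.single (i, j) 1) := by
  unfold Zs pauliZ
  simp_rw [single_dotProduct, one_mul, AddChar.zmodChar_apply]
  rfl

theorem Zcol_eq_pauliZ (j : Fin n) : Zcol m n j = pauliZ ℂ (colSupport m n j) := by
  have hsign : ∀ x : Fin m × Fin n → ZMod 2,
      signChar ℂ (colSupport m n j ⬝ᵥ x) = (-1) ^ ∑ i : Fin m, (x (i, j)).val := by
    intro x
    rw [← AddChar.zmodChar_apply' neg_one_sq, Nat.cast_sum]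
    simp [dotProduct, colSupport, Fintype.sum_prod_type]
  unfold Zcol pauliZ
  simp_rw [hsign]
  rfl

theorem Ztilde_eq_pauliZ [NeZero n] (j : Fin n) :
    Ztilde m n j = pauliZ ℂ (colSupport m n (j - 1) + colSupport m n j) := by
  rw [Ztilde, Zcol_eq_pauliZ, Zcol_eq_pauliZ]
  exact pauliZ_mul_pauliZ _ _

theorem Xtilde_eq_pauliX [NeZero m] (i : Fin m) :
    Xtilde m n i = pauliX ℂ (rowSupport m n (i - 1) + rowSupport m n i) := by
  rw [Xtilde, Xrow_eq_pauliX, Xrow_eq_pauliX]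
  exact pauliX_mul_pauliX _ _

theorem Xbar_eq_pauliX [NeZero m] (h : Fin m) (k : Fin n) :
    Xbar m n h k = pauliX ℂ (Pi.single (h - 1, k) 1 + Pi.single (h, k) 1) := by
  rw [Xbar, Xs_eq_pauliX, Xs_eq_pauliX]
  exact pauliX_mul_pauliX _ _

theorem Zbar_eq_pauliZ [NeZero n] (i : Fin m) (j : Fin n) :
    Zbar m n i j = pauliZ ℂ (Pi.single (i, j - 1) 1 + Pi.single (i, j) 1) := by
  rw [Zbar, Zs_eq_pauliZ, Zs_eq_pauliZ]
  exact pauliZ_mul_pauliZ _ _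

end BaconShor

/-- Every Bacon-Shor stabilizer commutes with every gauge operator. -/
theorem stabilizers_commute_with_gauge [NeZero m] [NeZero n] :
    ∀ (i : Fin m) (j : Fin n) (h : Fin m) (k : Fin n) (i' : Fin m) (j' : Fin n),
      1 ≤ i.val → 1 ≤ j.val → 1 ≤ h.val → 1 ≤ j'.val →
      (Ztilde m n j * Xbar m n h k = Xbar m n h k * Ztilde m n j) ∧
      (Ztilde m n j * Zbar m n i' j' = Zbar m n i' j' * Ztilde m n j) ∧
      (Xtilde m n i * Xbar m n h k = Xbar m n h k * Xtilde m n i) ∧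
      (Xtilde m n i * Zbar m n i' j' = Zbar m n i' j' * Xtilde m n i) := by
  intro i j h k i' j' _ _ _ _
  rw [Ztilde_eq_pauliZ, Xtilde_eq_pauliX, Xbar_eq_pauliX, Zbar_eq_pauliZ]
  refine ⟨(commute_pauliX_pauliZ ?_).symm.eq, (commute_pauliZ_pauliZ _ _).eq,
    (commute_pauliX_pauliX _ _).eq, (commute_pauliX_pauliZ ?_).eq⟩
  · exact dotProduct_single_add_single_eq_zero rfl
  · rw [dotProduct_comm]
    exact dotProduct_single_add_single_eq_zero rfl
end
end

section
/- (Knill-Laflamme sufficiency via polar decomposition, key step) Let P be an orthogonal projector on a finite-dimensional Hilbert space and {F_k} operators satisfying P F_k† F_l P = d_{kl} P with d a diagonal real nonnegative matrix (d_{kl} = 0 for k ≠ l). Then for each k with d_{kk} > 0 there exists a unitary U_k with F_k P = √(d_{kk}) U_k P, and the projectors P_k = U_k P U_k† satisfy P_l P_k = 0 for l ≠ k. -/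
/-!
Since `P F_k† F_k P = d_kk P`, the map `F_k / √d_kk` is isometric on the range of `P`; extending
it to a unitary `U_k` of the whole space gives `F_k P = √d_kk U_k P`. For `l ≠ k` the hypothesis
then reads `√(d_ll d_kk) P U_l† U_k P = P F_l† F_k P = 0`, and
`P_l P_k = U_l P (P U_l† U_k P) P U_k† = 0`.
-/

open LinearMap
open scoped InnerProductSpace

section

variable {𝕜 E : Type*} [RCLike 𝕜] [NormedAddCommGroup E] [InnerProductSpace 𝕜 E]
  [FiniteDimensional 𝕜 E]

theorem LinearIsometry.toLinearMap_mem_unitary (L : E →ₗᵢ[𝕜] E) :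
    L.toLinearMap ∈ unitary (E →ₗ[𝕜] E) := by
  have h : star L.toLinearMap * L.toLinearMap = 1 := by
    ext x
    refine ext_inner_left 𝕜 fun y => ?_
    simp [star_eq_adjoint, adjoint_inner_right]
  exact Unitary.mem_iff.mpr ⟨h, mul_eq_one_comm.mp h⟩

theorem Submodule.exists_mem_unitary_eqOn_of_norm_map (S : Submodule 𝕜 E) (T : E →ₗ[𝕜] E)
    (hT : ∀ x ∈ S, ‖T x‖ = ‖x‖) : ∃ U ∈ unitary (E →ₗ[𝕜] E), ∀ x ∈ S, U x = T x := by
  let L : S →ₗᵢ[𝕜] E := ⟨T ∘ₗ S.subtype, fun x => hT x x.2⟩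
  exact ⟨L.extend.toLinearMap, L.extend.toLinearMap_mem_unitary,
    fun x hx => L.extend_apply ⟨x, hx⟩⟩

section Projection

variable {P : E →ₗ[𝕜] E}

theorem adjoint_mul_proj_mul_mul_proj (hPadj : adjoint P = P) (A B : E →ₗ[𝕜] E) :
    adjoint (A * P) * (B * P) = P * adjoint A * B * P := by
  rw [← star_eq_adjoint, star_mul, star_eq_adjoint P, hPadj, star_eq_adjoint, mul_assoc,
    mul_assoc, mul_assoc]

theorem norm_apply_proj_sq_of_proj_adjoint_mul_self (hPproj : P * P = P) (hPadj : adjoint P = P)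
    {A : E →ₗ[𝕜] E} {c : ℝ} (h : P * adjoint A * A * P = (c : 𝕜) • P) (v : E) :
    ‖A (P v)‖ ^ 2 = c * ‖P v‖ ^ 2 := by
  have hP : ∀ x y : E, ⟪x, P y⟫_𝕜 = ⟪P x, y⟫_𝕜 := fun x y => by
    conv_lhs => rw [← hPadj]
    exact adjoint_inner_right P x y
  refine RCLike.ofReal_injective (K := 𝕜) ?_
  push_cast
  calc ((‖A (P v)‖ : 𝕜)) ^ 2 = ⟪A (P v), A (P v)⟫_𝕜 := (inner_self_eq_norm_sq_to_K _).symm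
    _ = ⟪v, (P * adjoint A * A * P) v⟫_𝕜 := by simp [hP, adjoint_inner_right]
    _ = c * ⟪v, P (P v)⟫_𝕜 := by
      rw [h, LinearMap.smul_apply, inner_smul_right, ← Module.End.mul_apply, hPproj]
    _ = c * (‖P v‖ : 𝕜) ^ 2 := by rw [hP, inner_self_eq_norm_sq_to_K]

theorem exists_mem_unitary_mul_proj_eq_sqrt_smul (hPproj : P * P = P) (hPadj : adjoint P = P)
    {A : E →ₗ[𝕜] E} {c : ℝ} (hc : 0 < c) (h : P * adjoint A * A * P = (c : 𝕜) • P) :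
    ∃ U ∈ unitary (E →ₗ[𝕜] E), A * P = (√c : 𝕜) • (U * P) := by
  have hs : 0 < √c := Real.sqrt_pos.mpr hc
  have hnorm : ∀ v, ‖A (P v)‖ = √c * ‖P v‖ := fun v => by
    rw [← Real.sqrt_sq (norm_nonneg _), norm_apply_proj_sq_of_proj_adjoint_mul_self hPproj hPadj h,
      Real.sqrt_mul hc.le, Real.sqrt_sq (norm_nonneg _)]
  obtain ⟨U, hU, hUA⟩ := (range P).exists_mem_unitary_eqOn_of_norm_map ((√c : 𝕜)⁻¹ • A) <| by
    rintro _ ⟨v, rfl⟩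
    rw [LinearMap.smul_apply, norm_smul, norm_inv, RCLike.norm_ofReal, abs_of_pos hs, hnorm,
      inv_mul_cancel_left₀ hs.ne']
  refine ⟨U, hU, ?_⟩
  ext v
  rw [Module.End.mul_apply, LinearMap.smul_apply, Module.End.mul_apply, hUA _ (mem_range_self P v),
    LinearMap.smul_apply, smul_inv_smul₀ (RCLike.ofReal_ne_zero.mpr hs.ne')]

theorem proj_adjoint_mul_mul_proj_eq_zero_of_smul (hPadj : adjoint P = P)
    {A B U V : E →ₗ[𝕜] E} {a b : 𝕜} (ha : a ≠ 0) (hb : b ≠ 0)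
    (hA : A * P = a • (U * P)) (hB : B * P = b • (V * P)) (h : P * adjoint A * B * P = 0) :
    P * adjoint U * V * P = 0 := by
  rw [← adjoint_mul_proj_mul_mul_proj hPadj] at h ⊢
  rw [hA, hB, ← star_eq_adjoint, star_smul, smul_mul_smul_comm] at h
  exact (smul_eq_zero.mp h).resolve_left (mul_ne_zero (star_ne_zero.mpr ha) hb)

theorem conj_proj_mul_conj_proj_eq_zero (hPproj : P * P = P) {U V : E →ₗ[𝕜] E}
    (h : P * adjoint U * V * P = 0) : U * P * adjoint U * (V * P * adjoint V) = 0 := by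
  have hP : ∀ X : E →ₗ[𝕜] E, X * P * P = X * P := fun X => by rw [mul_assoc, hPproj]
  calc U * P * adjoint U * (V * P * adjoint V)
      = U * P * (P * adjoint U * V * P) * P * adjoint V := by simp only [← mul_assoc, hP]
    _ = 0 := by rw [h, mul_zero, zero_mul, zero_mul]

end Projection

end

theorem kl_polar_step_general {E : Type*} [NormedAddCommGroup E] [InnerProductSpace ℂ E]
    [FiniteDimensional ℂ E] {ι : Type*}
    (P : E →ₗ[ℂ] E) (hPproj : P * P = P) (hPadj : LinearMap.adjoint P = P)
    (F : ι → (E →ₗ[ℂ] E)) (d : ι → ι → ℝ)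
    (hdiag : ∀ k l, k ≠ l → d k l = 0)
    (hF : ∀ k l, P * LinearMap.adjoint (F k) * F l * P = ((d k l : ℝ) : ℂ) • P) :
    ∃ U : ι → (E →ₗ[ℂ] E),
      (∀ k, 0 < d k k →
        (LinearMap.adjoint (U k) * U k = 1 ∧ U k * LinearMap.adjoint (U k) = 1) ∧
        F k * P = ((Real.sqrt (d k k) : ℝ) : ℂ) • (U k * P)) ∧
      (∀ l k, l ≠ k → 0 < d l l → 0 < d k k →
        (U l * P * LinearMap.adjoint (U l)) * (U k * P * LinearMap.adjoint (U k)) = 0) := by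
  have hpolar : ∀ k, ∃ U ∈ unitary (E →ₗ[ℂ] E),
      0 < d k k → F k * P = ((√(d k k) : ℝ) : ℂ) • (U * P) := fun k => by
    by_cases hk : 0 < d k k
    · obtain ⟨U, hU, hFU⟩ := exists_mem_unitary_mul_proj_eq_sqrt_smul hPproj hPadj hk (hF k k)
      exact ⟨U, hU, fun _ => hFU⟩
    · exact ⟨1, one_mem _, fun h => absurd h hk⟩
  choose U hU hFU using hpolar
  have hsqrt : ∀ k, 0 < d k k → ((√(d k k) : ℝ) : ℂ) ≠ 0 := fun k hk =>
    Complex.ofReal_ne_zero.mpr (Real.sqrt_pos.mpr hk).ne'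
  refine ⟨U, fun k hk => ⟨Unitary.mem_iff.mp (hU k), hFU k hk⟩, fun l k hne hl hk => ?_⟩
  refine conj_proj_mul_conj_proj_eq_zero hPproj <|
    proj_adjoint_mul_mul_proj_eq_zero_of_smul hPadj (hsqrt l hl) (hsqrt k hk)
      (hFU l hl) (hFU k hk) ?_
  rw [hF l k, hdiag l k hne, Complex.ofReal_zero, zero_smul]

/-- Knill-Laflamme sufficiency, key polar-decomposition step: if P F_k† F_l P = d_kl P
with d diagonal, real and nonnegative, then for each k with d_kk > 0 there is a unitary
U_k with F_k P = √(d_kk) U_k P, and the projectors P_k = U_k P U_k† are mutually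
orthogonal. -/
theorem kl_polar_step {E : Type*} [NormedAddCommGroup E] [InnerProductSpace ℂ E]
    [FiniteDimensional ℂ E] {ι : Type*}
    (P : E →ₗ[ℂ] E) (hPproj : P * P = P) (hPadj : LinearMap.adjoint P = P)
    (F : ι → (E →ₗ[ℂ] E)) (d : ι → ι → ℝ)
    (hdiag : ∀ k l, k ≠ l → d k l = 0) (hnn : ∀ k, 0 ≤ d k k)
    (hF : ∀ k l, P * LinearMap.adjoint (F k) * F l * P = ((d k l : ℝ) : ℂ) • P) :
    ∃ U : ι → (E →ₗ[ℂ] E),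
      (∀ k, 0 < d k k →
        (LinearMap.adjoint (U k) * U k = 1 ∧ U k * LinearMap.adjoint (U k) = 1) ∧
        F k * P = ((Real.sqrt (d k k) : ℝ) : ℂ) • (U k * P)) ∧
      (∀ l k, l ≠ k → 0 < d l l → 0 < d k k →
        (U l * P * LinearMap.adjoint (U l)) * (U k * P * LinearMap.adjoint (U k)) = 0) :=
  kl_polar_step_general P hPproj hPadj F d hdiag hF
end

section
/- If a trace-preserving quantum channel R with Kraus operators {R_l} (so Σ_l R_l† R_l = I) and operators {A_k} satisfy R_l A_k P = c_{lk} P for all l,k, where P is a projector and c_{lk} ∈ ℂ, then P A_j† A_k P = γ_{jk} P where γ_{jk} = Σ_l c_{lj}* c_{lk}, and the matrix γ is Hermitian positive semidefinite. -/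
/-! Inserting the completeness relation `∑ₗ Rₗ† Rₗ = 1` gives
`P Aⱼ† Aₖ P = ∑ₗ (Rₗ Aⱼ P)† (Rₗ Aₖ P) = ∑ₗ (c_{lj}* c_{lk}) P² = γⱼₖ P`,
and `γ = C† C` for the matrix `C = (c_{lk})`, so it is a Gram matrix. -/

open scoped ComplexOrder

section StarAlgebra

variable {𝕜 B ι : Type*} [CommSemiring 𝕜] [StarRing 𝕜] [Semiring B] [StarRing B]
  [Algebra 𝕜 B] [StarModule 𝕜 B] [Fintype ι]

theorem IsStarProjection.star_smul_mul_smul {P : B} (hP : IsStarProjection P) (a b : 𝕜) :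
    star (a • P) * (b • P) = (star a * b) • P := by
  rw [star_smul, hP.isSelfAdjoint.star_eq, smul_mul_smul_comm, hP.isIdempotentElem.eq]

theorem star_mul_eq_sum_smul_of_sum_star_mul_self_eq_one {R : ι → B}
    (hR : ∑ l, star (R l) * R l = 1) {P X Y : B} (hP : IsStarProjection P) {a b : ι → 𝕜}
    (hX : ∀ l, R l * X = a l • P) (hY : ∀ l, R l * Y = b l • P) :
    star X * Y = (∑ l, star (a l) * b l) • P :=
  calc star X * Y = star X * (∑ l, star (R l) * R l) * Y := by rw [hR, mul_one]
    _ = ∑ l, star (R l * X) * (R l * Y) := by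
        simp only [Finset.mul_sum, Finset.sum_mul, star_mul, mul_assoc]
    _ = (∑ l, star (a l) * b l) • P := by
        simp only [hX, hY, hP.star_smul_mul_smul, Finset.sum_smul]

end StarAlgebra

theorem Matrix.posSemidef_of_sum_star_mul {ι κ R : Type*} [Fintype ι] [Fintype κ]
    [Ring R] [PartialOrder R] [StarRing R] [StarOrderedRing R] (C : Matrix ι κ R) :
    (Matrix.of fun j k => ∑ l, star (C l j) * C l k).PosSemidef := by
  convert Matrix.posSemidef_conjTranspose_mul_self C using 1
  ext j k
  simp only [Matrix.of_apply, Matrix.mul_apply, Matrix.conjTranspose_apply]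

theorem kraus_projector_gamma_general {E : Type*} [NormedAddCommGroup E] [InnerProductSpace ℂ E]
    [FiniteDimensional ℂ E] {ι κ : Type*} [Fintype ι] [Fintype κ]
    (P : E →ₗ[ℂ] E) (hPproj : P * P = P) (hPadj : LinearMap.adjoint P = P)
    (R : ι → (E →ₗ[ℂ] E)) (A : κ → (E →ₗ[ℂ] E)) (c : ι → κ → ℂ)
    (hTP : ∑ l, LinearMap.adjoint (R l) * R l = 1)
    (hRA : ∀ l k, R l * A k * P = c l k • P) :
    (∀ j k, P * LinearMap.adjoint (A j) * A k * P
        = (∑ l, (starRingEnd ℂ) (c l j) * c l k) • P) ∧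
    (Matrix.of fun j k : κ => ∑ l, (starRingEnd ℂ) (c l j) * c l k).IsHermitian ∧
    (Matrix.of fun j k : κ => ∑ l, (starRingEnd ℂ) (c l j) * c l k).PosSemidef := by
  have hP : IsStarProjection P := ⟨hPproj, hPadj⟩
  have hγ := Matrix.posSemidef_of_sum_star_mul (Matrix.of c)
  refine ⟨fun j k => ?_, hγ.isHermitian, hγ⟩
  have hRAP : ∀ k l, R l * (A k * P) = c l k • P := fun k l => by rw [← mul_assoc, hRA]
  have h := star_mul_eq_sum_smul_of_sum_star_mul_self_eq_one hTP hP (hRAP j) (hRAP k)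
  rwa [star_mul, hP.isSelfAdjoint.star_eq, ← mul_assoc, LinearMap.star_eq_adjoint] at h

/-- If a trace-preserving channel with Kraus operators R_l and operators A_k satisfy
R_l A_k P = c_lk P for a projector P, then P A_j† A_k P = γ_jk P with
γ_jk = Σ_l c_lj* c_lk, and γ is Hermitian positive semidefinite. -/
theorem kraus_projector_gamma {E : Type*} [NormedAddCommGroup E] [InnerProductSpace ℂ E]
    [FiniteDimensional ℂ E] {ι κ : Type*} [Fintype ι] [Fintype κ] [DecidableEq κ]
    (P : E →ₗ[ℂ] E) (hPproj : P * P = P) (hPadj : LinearMap.adjoint P = P)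
    (R : ι → (E →ₗ[ℂ] E)) (A : κ → (E →ₗ[ℂ] E)) (c : ι → κ → ℂ)
    (hTP : ∑ l, LinearMap.adjoint (R l) * R l = 1)
    (hRA : ∀ l k, R l * A k * P = c l k • P) :
    (∀ j k, P * LinearMap.adjoint (A j) * A k * P
        = (∑ l, (starRingEnd ℂ) (c l j) * c l k) • P) ∧
    (Matrix.of fun j k : κ => ∑ l, (starRingEnd ℂ) (c l j) * c l k).IsHermitian ∧
    (Matrix.of fun j k : κ => ∑ l, (starRingEnd ℂ) (c l j) * c l k).PosSemidef :=
  kraus_projector_gamma_general P hPproj hPadj R A c hTP hRA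
end

section
/- (Circuit-size lower bound for logical CZ on Bacon-Shor, base case) Suppose a circuit C consisting of CZ gates between two m×n Bacon-Shor codeblocks implements logical CZ, meaning conjugation by C maps X̄ supported on row r of block 1 to X̄ times a product of Z operators whose image on block 2 must equal logical Z̄ (a full column, requiring Z support meeting all m rows of block 2) for every row r. If for some pair of rows (r₁, r₂) no CZ gate connects a qubit of row r₁ in block 1 to a qubit of row r₂ in block 2, then conjugating X̄ on row r₁ yields Z support on at most m−1 rows of block 2, hence C does not implement logical CZ; consequently at least m² CZ gates are needed (modeling each row as needing connection to each of the m rows of the other block). -/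
open Classical

/-!
If every row pair carries a gate, sending a gate to its pair of rows is a map from the circuit
onto `Fin m × Fin m`, so the circuit has at least m² gates.
-/

lemma Finset.card_filter_univ_le_card_sub_one {α : Type*} [Fintype α] {p : α → Prop}
    [DecidablePred p] {a : α} (ha : ¬ p a) :
    (Finset.univ.filter p).card ≤ Fintype.card α - 1 := by
  have hlt : (Finset.univ.filter p).card < Fintype.card α :=
    Finset.card_lt_card (Finset.filter_ssubset.2 ⟨a, Finset.mem_univ a, ha⟩)
  omega

lemma Finset.card_mul_card_le_card_of_forall_exists {γ α β : Type*} [Fintype α] [Fintype β]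
    (s : Finset γ) (f : γ → α) (g : γ → β) (h : ∀ a b, ∃ x ∈ s, f x = a ∧ g x = b) :
    Fintype.card α * Fintype.card β ≤ s.card := by
  have hsurj : Set.SurjOn (fun x => (f x, g x)) s (Finset.univ : Finset (α × β)) := by
    rintro ⟨a, b⟩ -
    obtain ⟨x, hx, rfl, rfl⟩ := h a b
    exact ⟨x, hx, rfl⟩
  simpa using Finset.card_le_card_of_surjOn _ hsurj

theorem cz_circuit_lower_bound_general (m n : ℕ)
    (C : Finset ((Fin m × Fin n) × (Fin m × Fin n))) :
    (∀ r₁ r₂ : Fin m, (¬ ∃ g ∈ C, g.1.1 = r₁ ∧ g.2.1 = r₂) →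
      ((Finset.univ.filter
          (fun r₂' : Fin m => ∃ g ∈ C, g.1.1 = r₁ ∧ g.2.1 = r₂')).card ≤ m - 1 ∧
        ¬ ∀ r₂' : Fin m, ∃ g ∈ C, g.1.1 = r₁ ∧ g.2.1 = r₂')) ∧
    ((∀ r₁ r₂ : Fin m, ∃ g ∈ C, g.1.1 = r₁ ∧ g.2.1 = r₂) → m ^ 2 ≤ C.card) := by
  refine ⟨fun r₁ r₂ hgap => ⟨?_, fun hall => hgap (hall r₂)⟩, fun hall => ?_⟩
  · simpa using Finset.card_filter_univ_le_card_sub_one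
      (p := fun r => ∃ g ∈ C, g.1.1 = r₁ ∧ g.2.1 = r) hgap
  · simpa [sq] using
      Finset.card_mul_card_le_card_of_forall_exists C (fun g => g.1.1) (fun g => g.2.1) hall

/-- Circuit-size lower bound for logical CZ on Bacon-Shor (base case).
A CZ-form circuit between two m×n codeblocks is a finite set of gates, each pairing a
qubit (row, column) of block 1 with one of block 2.  Conjugating X̄ on row r₁ of block 1
introduces Z's exactly on the block-2 qubits paired with row-r₁ qubits; implementing
logical CZ requires this Z support to meet all m rows of block 2, for every r₁.
If some pair of rows (r₁, r₂) is unconnected, the Z support from row r₁ meets at most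
m−1 rows, so the circuit fails to implement logical CZ; and any circuit connecting every
pair of rows (with each row in at most m gates after gauge reduction) has at least
m² gates. -/
theorem cz_circuit_lower_bound (m n : ℕ) (hm : 0 < m)
    (C : Finset ((Fin m × Fin n) × (Fin m × Fin n)))
    (hrow : ∀ r₁ : Fin m, (C.filter (fun g => g.1.1 = r₁)).card ≤ m) :
    (∀ r₁ r₂ : Fin m, (¬ ∃ g ∈ C, g.1.1 = r₁ ∧ g.2.1 = r₂) →
      ((Finset.univ.filter
          (fun r₂' : Fin m => ∃ g ∈ C, g.1.1 = r₁ ∧ g.2.1 = r₂')).card ≤ m - 1 ∧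
        ¬ ∀ r₂' : Fin m, ∃ g ∈ C, g.1.1 = r₁ ∧ g.2.1 = r₂')) ∧
    ((∀ r₁ r₂ : Fin m, ∃ g ∈ C, g.1.1 = r₁ ∧ g.2.1 = r₂) → m ^ 2 ≤ C.card) :=
  cz_circuit_lower_bound_general m n C
end
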